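/- Let (E,{·,·}) be a coisotropic vector bundle, (μ̂,φ̂) a Hamiltonian homotopy from the coisotropic section μ0 to the coisotropic section μ1, and ρ a gluing function. Let (μ̂,φ̂)^{-1} denote the reversed Hamiltonian homotopy (μ_{1−t}, φ_{1−t} ∘ φ_1^{-1}) from μ1 to μ0. Then (μ̂,φ̂)^{-1} □_ρ (μ̂,φ̂) ≃_H id_{μ0} and (μ̂,φ̂) □_ρ (μ̂,φ̂)^{-1} ≃_H id_{μ1}, where id_μ denotes the constant Hamiltonian homotopy (the constant family of sections μ together with the constant family of diffeomorphisms id_E). -/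

import Mathlib

open Set
open scoped Manifold Bundle

/-- A Poisson bracket on a smooth manifold `M` modelled on `I`: an ℝ-bilinear,
antisymmetric bracket on smooth real-valued functions satisfying the Jacobi identity
and the Leibniz rule. -/
structure PoissonBracket {EM : Type*} [NormedAddCommGroup EM] [NormedSpace ℝ EM]
    {HM : Type*} [TopologicalSpace HM] (I : ModelWithCorners ℝ EM HM)
    (M : Type*) [TopologicalSpace M] [ChartedSpace HM M] where
  bracket : (M → ℝ) → (M → ℝ) → M → ℝ
  smooth_bracket : ∀ f g : M → ℝ, ContMDiff I 𝓘(ℝ, ℝ) (⊤ : ℕ∞) f → ContMDiff I 𝓘(ℝ, ℝ) (⊤ : ℕ∞) g →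
    ContMDiff I 𝓘(ℝ, ℝ) (⊤ : ℕ∞) (bracket f g)
  add_left : ∀ f g h : M → ℝ, ContMDiff I 𝓘(ℝ, ℝ) (⊤ : ℕ∞) f → ContMDiff I 𝓘(ℝ, ℝ) (⊤ : ℕ∞) g →
    ContMDiff I 𝓘(ℝ, ℝ) (⊤ : ℕ∞) h → bracket (f + g) h = bracket f h + bracket g h
  smul_left : ∀ (c : ℝ) (f g : M → ℝ), ContMDiff I 𝓘(ℝ, ℝ) (⊤ : ℕ∞) f → ContMDiff I 𝓘(ℝ, ℝ) (⊤ : ℕ∞) g →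
    bracket (c • f) g = c • bracket f g
  antisymm : ∀ f g : M → ℝ, ContMDiff I 𝓘(ℝ, ℝ) (⊤ : ℕ∞) f → ContMDiff I 𝓘(ℝ, ℝ) (⊤ : ℕ∞) g →
    bracket f g = -bracket g f
  jacobi : ∀ f g h : M → ℝ, ContMDiff I 𝓘(ℝ, ℝ) (⊤ : ℕ∞) f → ContMDiff I 𝓘(ℝ, ℝ) (⊤ : ℕ∞) g →
    ContMDiff I 𝓘(ℝ, ℝ) (⊤ : ℕ∞) h →
    bracket f (bracket g h) + bracket g (bracket h f) + bracket h (bracket f g) = 0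
  leibniz : ∀ f g h : M → ℝ, ContMDiff I 𝓘(ℝ, ℝ) (⊤ : ℕ∞) f → ContMDiff I 𝓘(ℝ, ℝ) (⊤ : ℕ∞) g →
    ContMDiff I 𝓘(ℝ, ℝ) (⊤ : ℕ∞) h → bracket f (g * h) = bracket f g * h + g * bracket f h

/-- A smooth one-parameter family of Hamiltonian diffeomorphisms of the Poisson
manifold `(M, P)`: a smooth map `φ : M × [0,1] → M` (written `toFun t x`) such that each
`φ_t`, `t ∈ [0,1]`, is a diffeomorphism (with inverse `invFun t`), `φ_0 = id`, generated
by a smooth function `F : M × [0,1] → ℝ` in the sense that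
`d/dt|_{t=s} f (φ_t x) = {F_s, f} (φ_s x)` for every smooth `f : M → ℝ`. -/
structure HamiltonianFamily {EM : Type*} [NormedAddCommGroup EM] [NormedSpace ℝ EM]
    {HM : Type*} [TopologicalSpace HM] {I : ModelWithCorners ℝ EM HM}
    {M : Type*} [TopologicalSpace M] [ChartedSpace HM M]
    (P : PoissonBracket I M) where
  toFun : ℝ → M → M
  invFun : ℝ → M → M
  smooth_toFun : ContMDiffOn (I.prod 𝓘(ℝ, ℝ)) I (⊤ : ℕ∞) (fun p : M × ℝ => toFun p.2 p.1)
    (univ ×ˢ Icc 0 1)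
  smooth_each : ∀ t ∈ Icc (0:ℝ) 1, ContMDiff I I (⊤ : ℕ∞) (toFun t)
  smooth_inv : ∀ t ∈ Icc (0:ℝ) 1, ContMDiff I I (⊤ : ℕ∞) (invFun t)
  left_inv : ∀ t ∈ Icc (0:ℝ) 1, Function.LeftInverse (invFun t) (toFun t)
  right_inv : ∀ t ∈ Icc (0:ℝ) 1, Function.RightInverse (invFun t) (toFun t)
  init : toFun 0 = id
  F : ℝ → M → ℝ
  smooth_F : ContMDiffOn (I.prod 𝓘(ℝ, ℝ)) 𝓘(ℝ, ℝ) (⊤ : ℕ∞) (fun p : M × ℝ => F p.2 p.1)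
    (univ ×ˢ Icc 0 1)
  deriv_eq : ∀ f : M → ℝ, ContMDiff I 𝓘(ℝ, ℝ) (⊤ : ℕ∞) f → ∀ x : M, ∀ s ∈ Icc (0:ℝ) 1,
    HasDerivWithinAt (fun t => f (toFun t x)) (P.bracket (F s) f (toFun s x)) (Icc 0 1) s

section Bundle

variable {EB : Type*} [NormedAddCommGroup EB] [NormedSpace ℝ EB] [FiniteDimensional ℝ EB]
  {HB : Type*} [TopologicalSpace HB] {IB : ModelWithCorners ℝ EB HB}
  {S : Type*} [TopologicalSpace S] [ChartedSpace HB S] [IsManifold IB (⊤ : ℕ∞) S]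
  {F : Type*} [NormedAddCommGroup F] [NormedSpace ℝ F] [FiniteDimensional ℝ F]
  {V : S → Type*} [∀ x, AddCommGroup (V x)] [∀ x, Module ℝ (V x)]
  [∀ x, TopologicalSpace (V x)] [TopologicalSpace (Bundle.TotalSpace F V)]
  [FiberBundle F V] [VectorBundle ℝ F V] [ContMDiffVectorBundle (⊤ : ℕ∞) F V IB]

variable (F) in
/-- The graph of a section `μ` of the bundle, as a subset of the total space. -/
def secGraph (μ : ∀ x, V x) : Set (Bundle.TotalSpace F V) :=
  Set.range fun x => Bundle.TotalSpace.mk' F x (μ x)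

variable (IB F) in
/-- A section of the bundle is smooth if the induced map into the total space is. -/
def IsSmoothSection (μ : ∀ x, V x) : Prop :=
  ContMDiff IB (IB.prod 𝓘(ℝ, F)) (⊤ : ℕ∞) fun x => Bundle.TotalSpace.mk' F x (μ x)

/-- A subset `C` of the total space of the Poisson manifold given by the bundle is
coisotropic if its vanishing ideal is closed under the Poisson bracket. -/
def IsCoisotropic (P : PoissonBracket (IB.prod 𝓘(ℝ, F)) (Bundle.TotalSpace F V))
    (C : Set (Bundle.TotalSpace F V)) : Prop :=
  ∀ f g : Bundle.TotalSpace F V → ℝ,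
    ContMDiff (IB.prod 𝓘(ℝ, F)) 𝓘(ℝ, ℝ) (⊤ : ℕ∞) f → ContMDiff (IB.prod 𝓘(ℝ, F)) 𝓘(ℝ, ℝ) (⊤ : ℕ∞) g →
    (∀ p ∈ C, f p = 0) → (∀ p ∈ C, g p = 0) → ∀ p ∈ C, P.bracket f g p = 0

/-- `(E, Π)` is a coisotropic vector bundle: the zero section is coisotropic. -/
def IsCoisotropicVectorBundle
    (P : PoissonBracket (IB.prod 𝓘(ℝ, F)) (Bundle.TotalSpace F V)) : Prop :=
  IsCoisotropic P (secGraph F fun x => (0 : V x))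

/-- A Hamiltonian homotopy from the section `μ0` to the section `μ1`: a smooth family of
sections `sec : S × [0,1] → E` from `μ0` to `μ1`, together with a smooth one-parameter
family of Hamiltonian diffeomorphisms of the total space moving the graph of `μ0` to the
graph of `sec t` for each `t ∈ [0,1]`. -/
structure HamiltonianHomotopy (P : PoissonBracket (IB.prod 𝓘(ℝ, F)) (Bundle.TotalSpace F V))
    (μ0 μ1 : ∀ x, V x) where
  sec : ℝ → ∀ x, V x
  smooth_sec : ContMDiffOn (IB.prod 𝓘(ℝ, ℝ)) (IB.prod 𝓘(ℝ, F)) (⊤ : ℕ∞)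
    (fun p : S × ℝ => Bundle.TotalSpace.mk' F p.1 (sec p.2 p.1)) (univ ×ˢ Icc 0 1)
  ham : HamiltonianFamily P
  sec_zero : sec 0 = μ0
  sec_one : sec 1 = μ1
  graph_eq : ∀ t ∈ Icc (0:ℝ) 1, ham.toFun t '' secGraph F μ0 = secGraph F (sec t)


/-- An isotopy of Hamiltonian homotopies: a smooth two-parameter family of sections
`sec t s` together with a smooth two-parameter family of diffeomorphisms `Φ t s` of the
total space such that `Φ 0 s = id`, `sec 1 s` is independent of `s`, for each fixed `s`
the family `t ↦ Φ t s` is a smooth one-parameter family of Hamiltonian diffeomorphisms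
generated by a (jointly smooth) function `gen`, and `Φ t s` maps the graph of `sec 0 s`
onto the graph of `sec t s`. -/
structure HamiltonianIsotopy
    (P : PoissonBracket (IB.prod 𝓘(ℝ, F)) (Bundle.TotalSpace F V)) where
  sec : ℝ → ℝ → ∀ x, V x
  smooth_sec : ContMDiffOn ((IB.prod 𝓘(ℝ, ℝ)).prod 𝓘(ℝ, ℝ)) (IB.prod 𝓘(ℝ, F)) (⊤ : ℕ∞)
    (fun p : (S × ℝ) × ℝ => Bundle.TotalSpace.mk' F p.1.1 (sec p.1.2 p.2 p.1.1))
    ((univ ×ˢ Icc 0 1) ×ˢ Icc 0 1)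
  Φ : ℝ → ℝ → Bundle.TotalSpace F V → Bundle.TotalSpace F V
  Φinv : ℝ → ℝ → Bundle.TotalSpace F V → Bundle.TotalSpace F V
  smooth_Φ : ContMDiffOn (((IB.prod 𝓘(ℝ, F)).prod 𝓘(ℝ, ℝ)).prod 𝓘(ℝ, ℝ)) (IB.prod 𝓘(ℝ, F)) (⊤ : ℕ∞)
    (fun p : (Bundle.TotalSpace F V × ℝ) × ℝ => Φ p.1.2 p.2 p.1.1)
    ((univ ×ˢ Icc 0 1) ×ˢ Icc 0 1)
  smooth_each : ∀ t ∈ Icc (0:ℝ) 1, ∀ s ∈ Icc (0:ℝ) 1,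
    ContMDiff (IB.prod 𝓘(ℝ, F)) (IB.prod 𝓘(ℝ, F)) (⊤ : ℕ∞) (Φ t s)
  smooth_inv : ∀ t ∈ Icc (0:ℝ) 1, ∀ s ∈ Icc (0:ℝ) 1,
    ContMDiff (IB.prod 𝓘(ℝ, F)) (IB.prod 𝓘(ℝ, F)) (⊤ : ℕ∞) (Φinv t s)
  left_inv : ∀ t ∈ Icc (0:ℝ) 1, ∀ s ∈ Icc (0:ℝ) 1, Function.LeftInverse (Φinv t s) (Φ t s)
  right_inv : ∀ t ∈ Icc (0:ℝ) 1, ∀ s ∈ Icc (0:ℝ) 1, Function.RightInverse (Φinv t s) (Φ t s)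
  Φ_zero : ∀ s ∈ Icc (0:ℝ) 1, Φ 0 s = id
  sec_one_const : ∀ s ∈ Icc (0:ℝ) 1, ∀ s' ∈ Icc (0:ℝ) 1, sec 1 s = sec 1 s'
  gen : ℝ → ℝ → Bundle.TotalSpace F V → ℝ
  smooth_gen : ContMDiffOn (((IB.prod 𝓘(ℝ, F)).prod 𝓘(ℝ, ℝ)).prod 𝓘(ℝ, ℝ)) 𝓘(ℝ, ℝ) (⊤ : ℕ∞)
    (fun p : (Bundle.TotalSpace F V × ℝ) × ℝ => gen p.1.2 p.2 p.1.1)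
    ((univ ×ˢ Icc 0 1) ×ˢ Icc 0 1)
  deriv_eq : ∀ s ∈ Icc (0:ℝ) 1, ∀ f : Bundle.TotalSpace F V → ℝ,
    ContMDiff (IB.prod 𝓘(ℝ, F)) 𝓘(ℝ, ℝ) (⊤ : ℕ∞) f → ∀ x : Bundle.TotalSpace F V,
    ∀ t ∈ Icc (0:ℝ) 1,
    HasDerivWithinAt (fun τ => f (Φ τ s x)) (P.bracket (gen t s) f (Φ t s x)) (Icc 0 1) t
  graph_eq : ∀ t ∈ Icc (0:ℝ) 1, ∀ s ∈ Icc (0:ℝ) 1,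
    Φ t s '' secGraph F (sec 0 s) = secGraph F (sec t s)

variable {P : PoissonBracket (IB.prod 𝓘(ℝ, F)) (Bundle.TotalSpace F V)}

/-- The isotopy `iso` starts at the Hamiltonian homotopy `h0` (at `s = 0`) and ends at
the Hamiltonian homotopy `h1` (at `s = 1`). -/
def IsotopyConnects {μ0 μ1 : ∀ x, V x} (iso : HamiltonianIsotopy P)
    (h0 h1 : HamiltonianHomotopy P μ0 μ1) : Prop :=
  (∀ t ∈ Icc (0:ℝ) 1, iso.sec t 0 = h0.sec t) ∧
  (∀ t ∈ Icc (0:ℝ) 1, iso.Φ t 0 = h0.ham.toFun t) ∧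
  (∀ t ∈ Icc (0:ℝ) 1, iso.sec t 1 = h1.sec t) ∧
  (∀ t ∈ Icc (0:ℝ) 1, iso.Φ t 1 = h1.ham.toFun t)

/-- Two Hamiltonian homotopies are isotopic, `≃_H`, if there is an isotopy of
Hamiltonian homotopies from one to the other. -/
def IsotopicHH {μ0 μ1 : ∀ x, V x} (h0 h1 : HamiltonianHomotopy P μ0 μ1) : Prop :=
  ∃ iso : HamiltonianIsotopy P, IsotopyConnects iso h0 h1

/-- The section part of the composition `(B, ψ) □_ρ (A, φ)` of Hamiltonian homotopies
with respect to the gluing function `ρ` (`A` is traversed first). -/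
noncomputable def compSec {μ ν ω : ∀ x, V x} (A : HamiltonianHomotopy P μ ν)
    (B : HamiltonianHomotopy P ν ω) (ρ : ℝ → ℝ) : ℝ → ∀ x, V x := fun t =>
  if t ≤ 1/3 then A.sec (2 * ρ t)
  else if t ≤ 2/3 then A.sec 1
  else B.sec (2 * ρ t - 1)

/-- The diffeomorphism part of the composition `(B, ψ) □_ρ (A, φ)` of Hamiltonian
homotopies with respect to the gluing function `ρ`. -/
noncomputable def compPhi {μ ν ω : ∀ x, V x} (A : HamiltonianHomotopy P μ ν)
    (B : HamiltonianHomotopy P ν ω) (ρ : ℝ → ℝ) :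
    ℝ → Bundle.TotalSpace F V → Bundle.TotalSpace F V := fun t x =>
  if t ≤ 1/3 then A.ham.toFun (2 * ρ t) x
  else if t ≤ 2/3 then A.ham.toFun 1 x
  else B.ham.toFun (2 * ρ t - 1) (A.ham.toFun 1 x)

/-- The Hamiltonian homotopy `Cc` realizes the composition `(B, ψ) □_ρ (A, φ)`: its
section part and its family of diffeomorphisms are given by the gluing formulas. -/
def RealizesComp {μ ν ω : ∀ x, V x} (Cc : HamiltonianHomotopy P μ ω)
    (B : HamiltonianHomotopy P ν ω) (A : HamiltonianHomotopy P μ ν) (ρ : ℝ → ℝ) : Prop :=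
  (∀ t ∈ Icc (0:ℝ) 1, Cc.sec t = compSec A B ρ t) ∧
  (∀ t ∈ Icc (0:ℝ) 1, Cc.ham.toFun t = compPhi A B ρ t)

/-- `h` is the constant (identity) Hamiltonian homotopy `id_μ` at the section `μ`. -/
def IsIdHomotopy {μ : ∀ x, V x} (h : HamiltonianHomotopy P μ μ) : Prop :=
  (∀ t ∈ Icc (0:ℝ) 1, h.sec t = μ) ∧ (∀ t ∈ Icc (0:ℝ) 1, h.ham.toFun t = id)

/-- `R` is the reversed Hamiltonian homotopy `(μ̂, φ̂)⁻¹ = (μ_{1-t}, φ_{1-t} ∘ φ₁⁻¹)`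
of `A`. -/
def IsReverseOf {μ0 μ1 : ∀ x, V x} (R : HamiltonianHomotopy P μ1 μ0)
    (A : HamiltonianHomotopy P μ0 μ1) : Prop :=
  (∀ t ∈ Icc (0:ℝ) 1, R.sec t = A.sec (1 - t)) ∧
  (∀ t ∈ Icc (0:ℝ) 1, ∀ x : Bundle.TotalSpace F V,
    R.ham.toFun t x = A.ham.toFun (1 - t) (A.ham.invFun 1 x))

/-- A gluing function: a smooth function `ρ : [0,1] → [0,1]` with `ρ 0 = 0`, `ρ 1 = 1`,
strictly positive derivative on `[0,1/3)` and on `(2/3,1]`, and identically `1/2` on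
`[1/3,2/3]`. -/
structure IsGluingFunction (ρ : ℝ → ℝ) : Prop where
  smooth : ContDiffOn ℝ (⊤ : ℕ∞) ρ (Icc 0 1)
  mapsTo : MapsTo ρ (Icc 0 1) (Icc 0 1)
  map_zero : ρ 0 = 0
  map_one : ρ 1 = 1
  deriv_pos_left : ∀ t ∈ Ico (0:ℝ) (1/3), 0 < derivWithin ρ (Icc 0 1) t
  deriv_pos_right : ∀ t ∈ Ioc (2/3:ℝ) 1, 0 < derivWithin ρ (Icc 0 1) t
  strictMono_left : StrictMonoOn ρ (Ico 0 (1/3))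
  strictMono_right : StrictMonoOn ρ (Ioc (2/3) 1)
  eq_half : ∀ t ∈ Icc (1/3:ℝ) (2/3), ρ t = 1/2


open scoped Topology

lemma glue_contDiffOn' {f h : ℝ → ℝ} (hf : ContDiffOn ℝ (⊤ : ℕ∞) f (Icc 0 1))
    (hh : ContDiffOn ℝ (⊤ : ℕ∞) h (Icc 0 1)) (heq : ∀ t ∈ Icc (1/3:ℝ) (2/3), f t = h t) :
    ContDiffOn ℝ (⊤ : ℕ∞) (fun t => if t ≤ 2/3 then f t else h t) (Icc 0 1) := by
  intro t ht
  rcases lt_or_ge t (2/3) with h1 | h1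
  · refine (hf t ht).congr_of_eventuallyEq ?_ (if_pos h1.le)
    filter_upwards [mem_nhdsWithin_of_mem_nhds (Iio_mem_nhds h1)] with x hx
    exact if_pos (le_of_lt hx)
  · have h13 : (1/3:ℝ) < t := by linarith
    have key : ∀ x ∈ Ioi (1/3:ℝ), (if x ≤ 2/3 then f x else h x) = h x := by
      intro x hx
      by_cases hc : x ≤ 2/3
      · simp only [if_pos hc]; exact heq x ⟨le_of_lt hx, hc⟩
      · simp only [if_neg hc]
    refine (hh t ht).congr_of_eventuallyEq ?_ (key t h13)
    filter_upwards [mem_nhdsWithin_of_mem_nhds (Ioi_mem_nhds h13)] with x hx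
    exact key x hx

lemma gluing_le_half' {ρ : ℝ → ℝ} (hρ : ContDiffOn ℝ (⊤ : ℕ∞) ρ (Icc 0 1))
    (hmono : StrictMonoOn ρ (Ico 0 (1/3))) (hhalf : ρ (1/3) = 1/2) :
    ∀ t ∈ Icc (0:ℝ) (1/3), ρ t ≤ 1/2 := by
  intro t ht
  rcases eq_or_lt_of_le ht.2 with h | h
  · rw [h, hhalf]
  · have hne : (𝓝[Ioo t (1/3)] (1/3:ℝ)).NeBot := right_nhdsWithin_Ioo_neBot h
    have hcont : ContinuousWithinAt ρ (Icc 0 1) (1/3) :=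
      hρ.continuousOn (1/3) ⟨by norm_num, by norm_num⟩
    have hsub : Ioo t (1/3:ℝ) ⊆ Icc 0 1 := fun x hx =>
      ⟨le_trans ht.1 hx.1.le, by linarith [hx.2]⟩
    have htend : Filter.Tendsto ρ (𝓝[Ioo t (1/3)] (1/3)) (𝓝 (ρ (1/3))) :=
      (hcont.mono hsub).tendsto
    have hev : ∀ᶠ x in 𝓝[Ioo t (1/3)] (1/3), ρ t ≤ ρ x := by
      filter_upwards [self_mem_nhdsWithin] with x hx
      exact (hmono ⟨ht.1, h⟩ ⟨le_trans ht.1 hx.1.le, hx.2⟩ hx.1).le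
    have := ge_of_tendsto htend hev
    rwa [hhalf] at this

lemma gluing_ge_half' {ρ : ℝ → ℝ} (hρ : ContDiffOn ℝ (⊤ : ℕ∞) ρ (Icc 0 1))
    (hmono : StrictMonoOn ρ (Ioc (2/3) 1)) (hhalf : ρ (2/3) = 1/2) :
    ∀ t ∈ Icc (2/3:ℝ) 1, 1/2 ≤ ρ t := by
  intro t ht
  rcases eq_or_lt_of_le ht.1 with h | h
  · rw [← h, hhalf]
  · have hne : (𝓝[Ioo (2/3) t] (2/3:ℝ)).NeBot := left_nhdsWithin_Ioo_neBot h
    have hcont : ContinuousWithinAt ρ (Icc 0 1) (2/3) :=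
      hρ.continuousOn (2/3) ⟨by norm_num, by norm_num⟩
    have hsub : Ioo (2/3:ℝ) t ⊆ Icc 0 1 := fun x hx =>
      ⟨by linarith [hx.1], le_trans hx.2.le ht.2⟩
    have htend : Filter.Tendsto ρ (𝓝[Ioo (2/3) t] (2/3)) (𝓝 (ρ (2/3))) :=
      (hcont.mono hsub).tendsto
    have hev : ∀ᶠ x in 𝓝[Ioo (2/3) t] (2/3), ρ x ≤ ρ t := by
      filter_upwards [self_mem_nhdsWithin] with x hx
      exact (hmono ⟨hx.1, le_trans hx.2.le ht.2⟩ ⟨h, ht.2⟩ hx.2).le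
    have := le_of_tendsto htend hev
    rwa [hhalf] at this

lemma g_mem_Icc {a u s : ℝ} (ha : a ∈ Icc (0:ℝ) 1) (hu : u ∈ Icc (0:ℝ) 1)
    (hs : s ∈ Icc (0:ℝ) 1) : s * a + (1 - s) * u ∈ Icc (0:ℝ) 1 := by
  constructor
  · nlinarith [ha.1, hu.1, hs.1, hs.2]
  · nlinarith [ha.2, hu.2, hs.1, hs.2]

lemma HamiltonianFamily.F_sect_smooth {EM : Type*} [NormedAddCommGroup EM] [NormedSpace ℝ EM]
    {HM : Type*} [TopologicalSpace HM] {I : ModelWithCorners ℝ EM HM}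
    {M : Type*} [TopologicalSpace M] [ChartedSpace HM M] [IsManifold I (⊤ : ℕ∞) M]
    {P : PoissonBracket I M} (h : HamiltonianFamily P) {u : ℝ} (hu : u ∈ Icc (0:ℝ) 1) :
    ContMDiff I 𝓘(ℝ, ℝ) (⊤ : ℕ∞) (h.F u) := by
  have h1 : ContMDiff I (I.prod 𝓘(ℝ, ℝ)) (⊤ : ℕ∞) (fun x : M => (x, u)) :=
    contMDiff_id.prodMk contMDiff_const
  have h2 := h.smooth_F.comp (h1.contMDiffOn (s := univ)) (fun x _ => ⟨mem_univ _, hu⟩)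
  rw [contMDiffOn_univ] at h2
  exact h2

lemma gval_contMDiffOn {EN : Type*} [NormedAddCommGroup EN] [NormedSpace ℝ EN]
    {HN : Type*} [TopologicalSpace HN] {J : ModelWithCorners ℝ EN HN}
    {N : Type*} [TopologicalSpace N] [ChartedSpace HN N] [IsManifold J (⊤ : ℕ∞) N]
    (τ : ℝ → ℝ) (hτ : ContDiffOn ℝ (⊤ : ℕ∞) τ (Icc 0 1)) (a : ℝ) :
    ContMDiffOn ((J.prod 𝓘(ℝ, ℝ)).prod 𝓘(ℝ, ℝ)) 𝓘(ℝ, ℝ) (⊤ : ℕ∞)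
      (fun p : (N × ℝ) × ℝ => p.2 * a + (1 - p.2) * τ p.1.2)
      ((univ ×ˢ Icc 0 1) ×ˢ Icc 0 1) := by
  have hproj : ContMDiff ((J.prod 𝓘(ℝ, ℝ)).prod 𝓘(ℝ, ℝ)) 𝓘(ℝ, ℝ) (⊤ : ℕ∞)
      (fun p : (N × ℝ) × ℝ => p.1.2) := contMDiff_snd.comp contMDiff_fst
  have hτM : ContMDiffOn 𝓘(ℝ, ℝ) 𝓘(ℝ, ℝ) (⊤ : ℕ∞) τ (Icc 0 1) :=
    contMDiffOn_iff_contDiffOn.mpr (hτ.of_le (by simp))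
  have h1 : ContMDiffOn ((J.prod 𝓘(ℝ, ℝ)).prod 𝓘(ℝ, ℝ)) 𝓘(ℝ, ℝ) (⊤ : ℕ∞)
      (fun p : (N × ℝ) × ℝ => τ p.1.2) ((univ ×ˢ Icc 0 1) ×ˢ Icc 0 1) := by
    have := hτM.comp (hproj.contMDiffOn (s := (univ ×ˢ Icc 0 1) ×ˢ Icc 0 1)) (fun p hp => hp.1.2)
    simpa [Function.comp_def] using this
  have hs : ContMDiff ((J.prod 𝓘(ℝ, ℝ)).prod 𝓘(ℝ, ℝ)) 𝓘(ℝ, ℝ) (⊤ : ℕ∞)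
      (fun p : (N × ℝ) × ℝ => p.2) := contMDiff_snd
  exact (hs.contMDiffOn.mul contMDiffOn_const).add
    ((contMDiffOn_const.sub hs.contMDiffOn).mul h1)


lemma exists_iso {μ0 μ1 : ∀ x, V x} (A : HamiltonianHomotopy P μ0 μ1)
    (τ : ℝ → ℝ) (hτs : ContDiffOn ℝ (⊤ : ℕ∞) τ (Icc 0 1)) (hτm : MapsTo τ (Icc 0 1) (Icc 0 1))
    (a : ℝ) (ha : a ∈ Icc (0:ℝ) 1) (hτ0 : τ 0 = a) (hτ1 : τ 1 = a)
    (b binv : Bundle.TotalSpace F V → Bundle.TotalSpace F V)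
    (hb : ContMDiff (IB.prod 𝓘(ℝ, F)) (IB.prod 𝓘(ℝ, F)) (⊤ : ℕ∞) b)
    (hbinv : ContMDiff (IB.prod 𝓘(ℝ, F)) (IB.prod 𝓘(ℝ, F)) (⊤ : ℕ∞) binv)
    (hbl : ∀ x, binv (b x) = x) (hbr : ∀ x, b (binv x) = x)
    (hba : ∀ x, A.ham.toFun a (b x) = x)
    (hbg : b '' secGraph F (A.sec a) = secGraph F μ0) :
    ∃ iso : HamiltonianIsotopy P,
      (∀ t s, iso.sec t s = A.sec (s * a + (1 - s) * τ t)) ∧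
      (∀ t s x, iso.Φ t s x = A.ham.toFun (s * a + (1 - s) * τ t) (b x)) := by
  have hgm : ∀ t ∈ Icc (0:ℝ) 1, ∀ s ∈ Icc (0:ℝ) 1,
      s * a + (1 - s) * τ t ∈ Icc (0:ℝ) 1 := fun t ht s hs => g_mem_Icc ha (hτm ht) hs
  have hg0 : ∀ s : ℝ, s * a + (1 - s) * τ 0 = a := fun s => by rw [hτ0]; ring
  have hg1 : ∀ s : ℝ, s * a + (1 - s) * τ 1 = a := fun s => by rw [hτ1]; ring
  have hdτ : ContMDiffOn 𝓘(ℝ, ℝ) 𝓘(ℝ, ℝ) (⊤ : ℕ∞) (derivWithin τ (Icc 0 1)) (Icc 0 1) :=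
    contMDiffOn_iff_contDiffOn.mpr (hτs.derivWithin (uniqueDiffOn_Icc one_pos) (by simp))
  refine ⟨{
    sec := fun t s => A.sec (s * a + (1 - s) * τ t)
    smooth_sec := ?_
    Φ := fun t s x => A.ham.toFun (s * a + (1 - s) * τ t) (b x)
    Φinv := fun t s x => binv (A.ham.invFun (s * a + (1 - s) * τ t) x)
    smooth_Φ := ?_
    smooth_each := fun t ht s hs => (A.ham.smooth_each _ (hgm t ht s hs)).comp hb
    smooth_inv := fun t ht s hs => hbinv.comp (A.ham.smooth_inv _ (hgm t ht s hs))
    left_inv := fun t ht s hs x => by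
      simp only [A.ham.left_inv _ (hgm t ht s hs) (b x), hbl]
    right_inv := fun t ht s hs x => by
      simp only [hbr, A.ham.right_inv _ (hgm t ht s hs) x]
    Φ_zero := fun s hs => by
      funext x
      simp only [hg0 s, hba x, id_eq]
    sec_one_const := fun s hs s' hs' => by simp only [hg1]
    gen := fun t s => ((1 - s) * derivWithin τ (Icc 0 1) t) • A.ham.F (s * a + (1 - s) * τ t)
    smooth_gen := ?_
    deriv_eq := ?_
    graph_eq := fun t ht s hs => by
      beta_reduce
      rw [hg0 s]
      calc (fun x => A.ham.toFun (s * a + (1 - s) * τ t) (b x)) '' secGraph F (A.sec a)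
          = A.ham.toFun (s * a + (1 - s) * τ t) '' (b '' secGraph F (A.sec a)) := by
            rw [← Set.image_comp]; rfl
        _ = A.ham.toFun (s * a + (1 - s) * τ t) '' secGraph F μ0 := by rw [hbg]
        _ = secGraph F (A.sec (s * a + (1 - s) * τ t)) := A.graph_eq _ (hgm t ht s hs) },
    fun _ _ => rfl, fun _ _ _ => rfl⟩
  · -- smooth_sec
    have hinner : ContMDiffOn ((IB.prod 𝓘(ℝ, ℝ)).prod 𝓘(ℝ, ℝ)) (IB.prod 𝓘(ℝ, ℝ)) (⊤ : ℕ∞)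
        (fun p : (S × ℝ) × ℝ => (p.1.1, p.2 * a + (1 - p.2) * τ p.1.2))
        ((univ ×ˢ Icc 0 1) ×ˢ Icc 0 1) :=
      ((contMDiff_fst.comp contMDiff_fst).contMDiffOn).prodMk (gval_contMDiffOn τ hτs a)
    have := A.smooth_sec.comp hinner
      (fun p hp => ⟨mem_univ _, g_mem_Icc ha (hτm hp.1.2) hp.2⟩)
    simpa [Function.comp_def] using this
  · -- smooth_Φ
    have hinner : ContMDiffOn (((IB.prod 𝓘(ℝ, F)).prod 𝓘(ℝ, ℝ)).prod 𝓘(ℝ, ℝ))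
        ((IB.prod 𝓘(ℝ, F)).prod 𝓘(ℝ, ℝ)) (⊤ : ℕ∞)
        (fun p : (Bundle.TotalSpace F V × ℝ) × ℝ => (b p.1.1, p.2 * a + (1 - p.2) * τ p.1.2))
        ((univ ×ˢ Icc 0 1) ×ˢ Icc 0 1) :=
      ((hb.comp (contMDiff_fst.comp contMDiff_fst)).contMDiffOn).prodMk
        (gval_contMDiffOn τ hτs a)
    have := A.ham.smooth_toFun.comp hinner
      (fun p hp => ⟨mem_univ _, g_mem_Icc ha (hτm hp.1.2) hp.2⟩)
    simpa [Function.comp_def] using this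
  · -- smooth_gen
    have hproj : ContMDiff (((IB.prod 𝓘(ℝ, F)).prod 𝓘(ℝ, ℝ)).prod 𝓘(ℝ, ℝ)) 𝓘(ℝ, ℝ) (⊤ : ℕ∞)
        (fun p : (Bundle.TotalSpace F V × ℝ) × ℝ => p.1.2) := contMDiff_snd.comp contMDiff_fst
    have h1 : ContMDiffOn (((IB.prod 𝓘(ℝ, F)).prod 𝓘(ℝ, ℝ)).prod 𝓘(ℝ, ℝ)) 𝓘(ℝ, ℝ) (⊤ : ℕ∞)
        (fun p : (Bundle.TotalSpace F V × ℝ) × ℝ => derivWithin τ (Icc 0 1) p.1.2)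
        ((univ ×ˢ Icc 0 1) ×ˢ Icc 0 1) := by
      have := hdτ.comp (hproj.contMDiffOn (s := (univ ×ˢ Icc 0 1) ×ˢ Icc 0 1))
        (fun p hp => hp.1.2)
      simpa [Function.comp_def] using this
    have factor1 : ContMDiffOn (((IB.prod 𝓘(ℝ, F)).prod 𝓘(ℝ, ℝ)).prod 𝓘(ℝ, ℝ)) 𝓘(ℝ, ℝ) (⊤ : ℕ∞)
        (fun p : (Bundle.TotalSpace F V × ℝ) × ℝ => (1 - p.2) * derivWithin τ (Icc 0 1) p.1.2)
        ((univ ×ˢ Icc 0 1) ×ˢ Icc 0 1) :=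
      (contMDiffOn_const.sub contMDiff_snd.contMDiffOn).mul h1
    have hinner : ContMDiffOn (((IB.prod 𝓘(ℝ, F)).prod 𝓘(ℝ, ℝ)).prod 𝓘(ℝ, ℝ))
        ((IB.prod 𝓘(ℝ, F)).prod 𝓘(ℝ, ℝ)) (⊤ : ℕ∞)
        (fun p : (Bundle.TotalSpace F V × ℝ) × ℝ => (p.1.1, p.2 * a + (1 - p.2) * τ p.1.2))
        ((univ ×ˢ Icc 0 1) ×ˢ Icc 0 1) :=
      ((contMDiff_fst.comp contMDiff_fst).contMDiffOn).prodMk (gval_contMDiffOn τ hτs a)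
    have factor2 : ContMDiffOn (((IB.prod 𝓘(ℝ, F)).prod 𝓘(ℝ, ℝ)).prod 𝓘(ℝ, ℝ)) 𝓘(ℝ, ℝ) (⊤ : ℕ∞)
        (fun p : (Bundle.TotalSpace F V × ℝ) × ℝ =>
          A.ham.F (p.2 * a + (1 - p.2) * τ p.1.2) p.1.1)
        ((univ ×ˢ Icc 0 1) ×ˢ Icc 0 1) := by
      have := A.ham.smooth_F.comp hinner
        (fun p hp => ⟨mem_univ _, g_mem_Icc ha (hτm hp.1.2) hp.2⟩)
      simpa [Function.comp_def] using this
    exact factor1.mul factor2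
  · -- deriv_eq
    intro s hs f hf x t ht
    beta_reduce
    have hgts : s * a + (1 - s) * τ t ∈ Icc (0:ℝ) 1 := g_mem_Icc ha (hτm ht) hs
    have outer := A.ham.deriv_eq f hf (b x) (s * a + (1 - s) * τ t) hgts
    have inner : HasDerivWithinAt (fun u => s * a + (1 - s) * τ u)
        ((1 - s) * derivWithin τ (Icc 0 1) t) (Icc 0 1) t :=
      (((hτs.differentiableOn (by simp) t ht).hasDerivWithinAt).const_mul (1 - s)).const_add (s * a)
    have hmaps : MapsTo (fun u => s * a + (1 - s) * τ u) (Icc 0 1) (Icc 0 1) :=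
      fun u hu => g_mem_Icc ha (hτm hu) hs
    have key := HasDerivWithinAt.comp t outer inner hmaps
    have hbr2 : P.bracket (((1 - s) * derivWithin τ (Icc 0 1) t) •
          A.ham.F (s * a + (1 - s) * τ t)) f
          (A.ham.toFun (s * a + (1 - s) * τ t) (b x))
        = P.bracket (A.ham.F (s * a + (1 - s) * τ t)) f
          (A.ham.toFun (s * a + (1 - s) * τ t) (b x))
          * ((1 - s) * derivWithin τ (Icc 0 1) t) := by
      rw [P.smul_left ((1 - s) * derivWithin τ (Icc 0 1) t)
        (A.ham.F (s * a + (1 - s) * τ t)) f (A.ham.F_sect_smooth hgts) hf]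
      simp [mul_comm]
    simpa [Function.comp_def, hbr2] using key

/-- Composing a Hamiltonian homotopy `(μ̂, φ̂)` from `μ0` to `μ1` with its reversed
homotopy `(μ̂, φ̂)⁻¹ = (μ_{1-t}, φ_{1-t} ∘ φ₁⁻¹)` gives a Hamiltonian homotopy isotopic
to the constant one: `(μ̂, φ̂)⁻¹ □_ρ (μ̂, φ̂) ≃_H id_{μ0}` and
`(μ̂, φ̂) □_ρ (μ̂, φ̂)⁻¹ ≃_H id_{μ1}`. -/
theorem statement_11 (hP : IsCoisotropicVectorBundle P) (μ0 μ1 : ∀ x, V x)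
    (hμ0 : IsSmoothSection IB F μ0 ∧ IsCoisotropic P (secGraph F μ0))
    (hμ1 : IsSmoothSection IB F μ1 ∧ IsCoisotropic P (secGraph F μ1))
    (A : HamiltonianHomotopy P μ0 μ1)
    (R : HamiltonianHomotopy P μ1 μ0) (hR : IsReverseOf R A)
    (I0 : HamiltonianHomotopy P μ0 μ0) (hI0 : IsIdHomotopy I0)
    (I1 : HamiltonianHomotopy P μ1 μ1) (hI1 : IsIdHomotopy I1)
    (ρ : ℝ → ℝ) (hρ : IsGluingFunction ρ)
    (Cc : HamiltonianHomotopy P μ0 μ0) (hC : RealizesComp Cc R A ρ)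
    (Cc' : HamiltonianHomotopy P μ1 μ1) (hC' : RealizesComp Cc' A R ρ) :
    IsotopicHH Cc I0 ∧ IsotopicHH Cc' I1 := by
  obtain ⟨hCs, hCp⟩ := hC
  obtain ⟨hC's, hC'p⟩ := hC'
  obtain ⟨hRs, hRp⟩ := hR
  obtain ⟨hI0s, hI0p⟩ := hI0
  obtain ⟨hI1s, hI1p⟩ := hI1
  have mem0 : (0:ℝ) ∈ Icc (0:ℝ) 1 := ⟨le_refl 0, zero_le_one⟩
  have mem1 : (1:ℝ) ∈ Icc (0:ℝ) 1 := ⟨zero_le_one, le_refl 1⟩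
  have hρ13 : ρ (1/3) = 1/2 := hρ.eq_half _ (by norm_num)
  have hρ23 : ρ (2/3) = 1/2 := hρ.eq_half _ (by norm_num)
  have hle : ∀ t ∈ Icc (0:ℝ) (1/3), ρ t ≤ 1/2 :=
    gluing_le_half' hρ.smooth hρ.strictMono_left hρ13
  have hge : ∀ t ∈ Icc (2/3:ℝ) 1, 1/2 ≤ ρ t :=
    gluing_ge_half' hρ.smooth hρ.strictMono_right hρ23
  have hhalf_le : ∀ t ∈ Icc (0:ℝ) 1, t ≤ 2/3 → ρ t ≤ 1/2 := by
    intro t ht h23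
    rcases le_or_gt t (1/3) with h | h
    · exact hle t ⟨ht.1, h⟩
    · rw [hρ.eq_half t ⟨h.le, h23⟩]
  have hhalf_ge : ∀ t ∈ Icc (0:ℝ) 1, ¬ t ≤ 2/3 → 1/2 ≤ ρ t := fun t ht h23 =>
    hge t ⟨(not_le.mp h23).le, ht.2⟩
  constructor
  · -- first isotopy : Cc ≃ I0
    obtain ⟨iso1, hs1, hp1⟩ := exists_iso A
      (fun u => if u ≤ 2/3 then 2 * ρ u else 2 - 2 * ρ u)
      (glue_contDiffOn' (contDiffOn_const.mul hρ.smooth)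
        (contDiffOn_const.sub (contDiffOn_const.mul hρ.smooth))
        (fun t ht => by rw [hρ.eq_half t ht]; norm_num))
      (by
        intro t ht
        beta_reduce
        by_cases h : t ≤ 2/3
        · rw [if_pos h]
          exact ⟨by linarith [(hρ.mapsTo ht).1], by linarith [hhalf_le t ht h]⟩
        · rw [if_neg h]
          exact ⟨by linarith [(hρ.mapsTo ht).2], by linarith [hhalf_ge t ht h]⟩)
      0 mem0
      (by norm_num [hρ.map_zero])
      (by norm_num [hρ.map_one])
      id id contMDiff_id contMDiff_id (fun x => rfl) (fun x => rfl)
      (fun x => by rw [A.ham.init]; rfl)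
      (by rw [A.sec_zero]; exact image_id _)
    refine ⟨iso1, ?_, ?_, ?_, ?_⟩
    · -- sec at s = 0
      intro t ht
      rw [hs1 t 0, hCs t ht]
      have e : (0:ℝ) * 0 + (1 - 0) * (if t ≤ 2/3 then 2 * ρ t else 2 - 2 * ρ t)
          = (if t ≤ 2/3 then 2 * ρ t else 2 - 2 * ρ t) := by ring
      rw [e]
      simp only [compSec]
      split_ifs with h1 h2
      · rfl
      · -- t ≤ 2/3, ¬ t ≤ 1/3 : middle
        rw [hρ.eq_half t ⟨(not_le.mp h2).le, h1⟩]; norm_num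
      · exact absurd (by linarith : t ≤ (2:ℝ)/3) h1
      · -- right part
        rename_i h2
        have hmem : 2 * ρ t - 1 ∈ Icc (0:ℝ) 1 :=
          ⟨by linarith [hhalf_ge t ht h1], by linarith [(hρ.mapsTo ht).2]⟩
        rw [hRs _ hmem, show (1:ℝ) - (2 * ρ t - 1) = 2 - 2 * ρ t by ring]
    · -- Φ at s = 0
      intro t ht
      rw [hCp t ht]
      funext x
      rw [hp1 t 0 x]
      have e : (0:ℝ) * 0 + (1 - 0) * (if t ≤ 2/3 then 2 * ρ t else 2 - 2 * ρ t)
          = (if t ≤ 2/3 then 2 * ρ t else 2 - 2 * ρ t) := by ring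
      rw [e]
      simp only [compPhi, id_eq]
      split_ifs with h1 h2
      · rfl
      · rw [hρ.eq_half t ⟨(not_le.mp h2).le, h1⟩]; norm_num
      · exact absurd (by linarith : t ≤ (2:ℝ)/3) h1
      · rename_i h2
        have hmem : 2 * ρ t - 1 ∈ Icc (0:ℝ) 1 :=
          ⟨by linarith [hhalf_ge t ht h1], by linarith [(hρ.mapsTo ht).2]⟩
        rw [hRp _ hmem (A.ham.toFun 1 x), A.ham.left_inv 1 mem1 x,
          show (1:ℝ) - (2 * ρ t - 1) = 2 - 2 * ρ t by ring]
    · -- sec at s = 1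
      intro t ht
      rw [hs1 t 1, hI0s t ht,
        show (1:ℝ) * 0 + (1 - 1) * (if t ≤ 2/3 then 2 * ρ t else 2 - 2 * ρ t) = 0 by ring,
        A.sec_zero]
    · -- Φ at s = 1
      intro t ht
      rw [hI0p t ht]
      funext x
      rw [hp1 t 1 x,
        show (1:ℝ) * 0 + (1 - 1) * (if t ≤ 2/3 then 2 * ρ t else 2 - 2 * ρ t) = 0 by ring,
        A.ham.init]
      rfl
  · -- second isotopy : Cc' ≃ I1
    obtain ⟨iso2, hs2, hp2⟩ := exists_iso A
      (fun u => if u ≤ 2/3 then 1 - 2 * ρ u else 2 * ρ u - 1)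
      (glue_contDiffOn' (contDiffOn_const.sub (contDiffOn_const.mul hρ.smooth))
        ((contDiffOn_const.mul hρ.smooth).sub contDiffOn_const)
        (fun t ht => by rw [hρ.eq_half t ht]; norm_num))
      (by
        intro t ht
        beta_reduce
        by_cases h : t ≤ 2/3
        · rw [if_pos h]
          exact ⟨by linarith [hhalf_le t ht h], by linarith [(hρ.mapsTo ht).1]⟩
        · rw [if_neg h]
          exact ⟨by linarith [hhalf_ge t ht h], by linarith [(hρ.mapsTo ht).2]⟩)
      1 mem1
      (by norm_num [hρ.map_zero])
      (by norm_num [hρ.map_one])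
      (A.ham.invFun 1) (A.ham.toFun 1)
      (A.ham.smooth_inv 1 mem1) (A.ham.smooth_each 1 mem1)
      (fun x => A.ham.right_inv 1 mem1 x) (fun x => A.ham.left_inv 1 mem1 x)
      (fun x => A.ham.right_inv 1 mem1 x)
      (by
        rw [← A.graph_eq 1 mem1, ← Set.image_comp,
          show A.ham.invFun 1 ∘ A.ham.toFun 1 = id from funext (A.ham.left_inv 1 mem1)]
        exact image_id _)
    refine ⟨iso2, ?_, ?_, ?_, ?_⟩
    · -- sec at s = 0
      intro t ht
      rw [hs2 t 0, hC's t ht]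
      have e : (0:ℝ) * 1 + (1 - 0) * (if t ≤ 2/3 then 1 - 2 * ρ t else 2 * ρ t - 1)
          = (if t ≤ 2/3 then 1 - 2 * ρ t else 2 * ρ t - 1) := by ring
      rw [e]
      simp only [compSec]
      split_ifs with h1 h2
      · -- t ≤ 2/3 and t ≤ 1/3
        have hmem : 2 * ρ t ∈ Icc (0:ℝ) 1 :=
          ⟨by linarith [(hρ.mapsTo ht).1], by linarith [hle t ⟨ht.1, h2⟩]⟩
        rw [hRs _ hmem]
      · -- middle
        rw [hRs 1 mem1, hρ.eq_half t ⟨(not_le.mp h2).le, h1⟩]; norm_num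
      · exact absurd (by linarith : t ≤ (2:ℝ)/3) h1
      · rfl
    · -- Φ at s = 0
      intro t ht
      rw [hC'p t ht]
      funext x
      rw [hp2 t 0 x]
      have e : (0:ℝ) * 1 + (1 - 0) * (if t ≤ 2/3 then 1 - 2 * ρ t else 2 * ρ t - 1)
          = (if t ≤ 2/3 then 1 - 2 * ρ t else 2 * ρ t - 1) := by ring
      rw [e]
      simp only [compPhi]
      split_ifs with h1 h2
      · have hmem : 2 * ρ t ∈ Icc (0:ℝ) 1 :=
          ⟨by linarith [(hρ.mapsTo ht).1], by linarith [hle t ⟨ht.1, h2⟩]⟩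
        rw [hRp _ hmem x]
      · rw [hRp 1 mem1 x, hρ.eq_half t ⟨(not_le.mp h2).le, h1⟩]; norm_num
      · exact absurd (by linarith : t ≤ (2:ℝ)/3) h1
      · rw [hRp 1 mem1 x, show (1:ℝ) - 1 = 0 from sub_self 1, A.ham.init]
        rfl
    · -- sec at s = 1
      intro t ht
      rw [hs2 t 1, hI1s t ht,
        show (1:ℝ) * 1 + (1 - 1) * (if t ≤ 2/3 then 1 - 2 * ρ t else 2 * ρ t - 1) = 1 by ring,
        A.sec_one]
    · -- Φ at s = 1
      intro t ht
      rw [hI1p t ht]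
      funext x
      rw [hp2 t 1 x,
        show (1:ℝ) * 1 + (1 - 1) * (if t ≤ 2/3 then 1 - 2 * ρ t else 2 * ρ t - 1) = 1 by ring,
        A.ham.right_inv 1 mem1 x]
      rfl


end Bundle
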